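/- The k-Schur functions {s_λ^{(k)}}, indexed by the k-bounded partitions λ, form a basis of the vector space Λ^{(k)}. -/

import Mathlib

open scoped BigOperators Classical

noncomputable section

/-- Model of the ring of symmetric functions `Λ = ℚ[h₁,h₂,…]`: the polynomial
ring on the (algebraically independent) complete homogeneous generators. -/
abbrev SymFn : Type := MvPolynomial ℕ ℚ

/-- The complete homogeneous symmetric function `h_r` (`h_0 = 1`). -/
def hh : ℕ → SymFn
  | 0 => 1
  | r + 1 => MvPolynomial.X r

/-- `h_n` for an integer index, with `h_n = 0` for `n < 0`. -/
def hZ (n : ℤ) : SymFn := if n < 0 then 0 else hh n.toNat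

/-- `h_λ = h_{λ₁} h_{λ₂} ⋯`. -/
def hProd (l : List ℕ) : SymFn := (l.map hh).prod

/-- The Schur function via the Jacobi–Trudi determinant
`s_λ = det(h_{λ_i - i + j})_{1 ≤ i,j ≤ ℓ(λ)}`. -/
def schur (l : List ℕ) : SymFn :=
  Matrix.det (Matrix.of fun i j : Fin l.length =>
    hZ (((l.get i : ℕ) : ℤ) - ((i : ℕ) : ℤ) + ((j : ℕ) : ℤ)))

/-- A partition: a weakly decreasing list of positive integers. -/
def IsPartition (l : List ℕ) : Prop := l.Pairwise (· ≥ ·) ∧ ∀ x ∈ l, 0 < x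

/-- A `k`-bounded partition: all parts at most `k`. -/
def KBounded (k : ℕ) (l : List ℕ) : Prop := ∀ x ∈ l, x ≤ k

/-- The main hook-length `h_M(λ) = λ₁ + ℓ(λ) - 1`. -/
def mainHook (l : List ℕ) : ℕ := l.headI + l.length - 1

/-- Dominance order: `Dominates μ λ` means `μ ≥ λ`, i.e.
`λ₁ + ⋯ + λ_i ≤ μ₁ + ⋯ + μ_i` for all `i`. -/
def Dominates (mu lam : List ℕ) : Prop := ∀ i : ℕ, (lam.take i).sum ≤ (mu.take i).sum

/-- Auxiliary function (with fuel) computing the `k`-split of a partition: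
successive blocks of main hook-length exactly `k` (the last block having
main hook-length at most `k`). -/
def kSplitAux (k : ℕ) : ℕ → List ℕ → List (List ℕ)
  | _, [] => []
  | 0, l => [l]
  | fuel + 1, a :: rest =>
    if (a :: rest).length ≤ k + 1 - a ∨ k + 1 - a = 0 then [a :: rest]
    else (a :: rest).take (k + 1 - a) :: kSplitAux k fuel ((a :: rest).drop (k + 1 - a))

/-- The `k`-split `λ^{→k}` of a `k`-bounded partition `λ`. -/
def kSplit (k : ℕ) (l : List ℕ) : List (List ℕ) := kSplitAux k l.length l

/-- The `k`-split polynomial `G_λ^{(k)} = s_{λ^{(1)}} s_{λ^{(2)}} ⋯ s_{λ^{(r)}}`. -/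
def Gk (k : ℕ) (l : List ℕ) : SymFn := ((kSplit k l).map schur).prod

/-- `Λ^{(k)}`: the linear span of the `h_λ` over `k`-bounded partitions `λ`. -/
def LamK (k : ℕ) : Submodule ℚ SymFn :=
  Submodule.span ℚ {f : SymFn | ∃ l : List ℕ, IsPartition l ∧ KBounded k l ∧ f = hProd l}

/-- The `k`-Schur functions (at `t = 1`), defined recursively from a family `T`
of projection operators by `s_λ^{(k)} = T_{λ₁} (s_{λ₁} ⋅ s_{(λ₂,λ₃,…)}^{(k)})`,
starting from `s_{()}^{(k)} = 1`. -/
def kSchurWith (T : ℕ → (SymFn →ₗ[ℚ] SymFn)) : List ℕ → SymFn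
  | [] => 1
  | a :: rest => T a (schur [a] * kSchurWith T rest)

/-- `T` is a family of projection operators for `Λ^{(k)}`:
`T_j G_λ^{(k)} = G_λ^{(k)}` if `λ₁ = j` and `0` otherwise, for every
`k`-bounded partition `λ`.  (Any such family restricts to the projection
operator of Lapointe–Morse on `Λ^{(k)}`.) -/
def ProjOps (k : ℕ) (T : ℕ → (SymFn →ₗ[ℚ] SymFn)) : Prop :=
  ∀ (j : ℕ) (l : List ℕ), IsPartition l → KBounded k l →
    T j (Gk k l) = if l.headI = j then Gk k l else 0


/-!
Order the partitions of a given size by their sum of squares `Σ λᵢ²`, which increases strictly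
along the dominance order. In the Jacobi–Trudi expansion of `s_λ`, every non-identity
permutation contributes a product `h_μ` with larger sum of squares (rearrangement inequality)
and with parts at most `h_M(λ)`. Hence each factor of the `k`-split, and with it `G_λ^{(k)}`,
is `h_λ` plus `k`-bounded terms strictly higher than `λ`. By this unitriangularity the `G_μ`
and the `h_μ` with `μ` above `λ` span the same space, which `T_j` therefore preserves, as it
keeps or kills each `G_μ`. By induction on `ℓ(λ)`,
`s_λ^{(k)} = T_{λ₁}(h_{λ₁} s_{(λ₂,…)}^{(k)}) = T_{λ₁}(G_λ + higher) = h_λ + higher`,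
so the `k`-Schur functions are unitriangular with respect to the basis `{h_λ}` of `Λ^{(k)}`.
Since the sum of squares is at most `k |λ|`, the order is well founded in both directions, and
a family unitriangular with respect to a basis is a basis of the same span.
-/

open Submodule

section Unitriangular

variable {ι R M : Type*} [Ring R] [AddCommGroup M] [Module R M] {r : ι → ι → Prop} {b v : ι → M}

theorem span_image_le_of_sub_mem_span [IsTrans ι r]
    (hv : ∀ i, v i - b i ∈ span R (b '' {j | r i j})) (i : ι) :
    span R (v '' {j | r i j}) ≤ span R (b '' {j | r i j}) := by
  rw [span_le]
  rintro _ ⟨j, hij, rfl⟩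
  rw [← sub_add_cancel (v j) (b j)]
  exact add_mem (span_mono (Set.image_mono fun _ => _root_.trans hij) (hv j))
    (subset_span ⟨j, hij, rfl⟩)

theorem span_image_eq_of_sub_mem_span [IsTrans ι r] (hwf : WellFounded (flip r))
    (hv : ∀ i, v i - b i ∈ span R (b '' {j | r i j})) (i : ι) :
    span R (v '' {j | r i j}) = span R (b '' {j | r i j}) := by
  refine le_antisymm (span_image_le_of_sub_mem_span hv i) ?_
  induction i using hwf.induction with
  | h i ih =>
    rw [span_le]
    rintro _ ⟨j, hij, rfl⟩
    rw [← sub_sub_cancel (v j) (b j)]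
    exact sub_mem (subset_span ⟨j, hij, rfl⟩)
      ((ih j hij).trans (span_mono (Set.image_mono fun _ => _root_.trans hij)) (hv j))

theorem span_range_eq_of_sub_mem_span [IsTrans ι r] (hwf : WellFounded (flip r))
    (hv : ∀ i, v i - b i ∈ span R (b '' {j | r i j})) :
    span R (Set.range v) = span R (Set.range b) := by
  apply le_antisymm <;> rw [span_le] <;> rintro _ ⟨i, rfl⟩
  · rw [← sub_add_cancel (v i) (b i)]
    exact add_mem (span_mono (Set.image_subset_range _ _) (hv i)) (subset_span ⟨i, rfl⟩)
  · rw [← sub_sub_cancel (v i) (b i)]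
    have hvi := hv i
    rw [← span_image_eq_of_sub_mem_span hwf hv i] at hvi
    exact sub_mem (subset_span ⟨i, rfl⟩) (span_mono (Set.image_subset_range _ _) hvi)

theorem LinearIndependent.of_sub_mem_span_image (hwf : WellFounded r)
    (hb : LinearIndependent R b) (hv : ∀ i, v i - b i ∈ span R (b '' {j | r i j})) :
    LinearIndependent R v := by
  classical
  rw [linearIndependent_iff]
  intro c hc
  by_contra hne
  -- an `r`-minimal index with nonzero coefficient occurs in no correction term `v j - b j`
  obtain ⟨i, hi, hmin⟩ := hwf.has_min (c.support : Set ι) (Finsupp.support_nonempty_iff.2 hne)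
  refine Finsupp.mem_support_iff.1 hi (hb.eq_zero_of_smul_mem_span i _ ?_)
  have hsplit : c i • b i = -(∑ j ∈ c.support.erase i, c j • b j)
      - ∑ j ∈ c.support, c j • (v j - b j) := by
    rw [Finsupp.linearCombination_apply, Finsupp.sum] at hc
    rw [← Finset.add_sum_erase _ _ hi] at hc ⊢
    simp only [smul_sub, Finset.sum_sub_distrib]
    rw [eq_neg_of_add_eq_zero_right hc]
    abel
  rw [hsplit]
  refine sub_mem (neg_mem (sum_mem fun j hj => smul_mem _ _ (subset_span ⟨j, ?_, rfl⟩)))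
    (sum_mem fun j hj => smul_mem _ _ (span_mono (Set.image_mono fun l hjl => ?_) (hv j)))
  · exact ⟨trivial, Finset.ne_of_mem_erase hj⟩
  · refine ⟨trivial, fun hli => hmin j hj ?_⟩
    rw [Set.mem_singleton_iff.1 hli] at hjl
    exact hjl

end Unitriangular

@[to_additive]
theorem List.prod_map_filter_pos {M : Type*} [CommMonoid M] {f : ℕ → M} (hf : f 0 = 1)
    (l : List ℕ) : ((l.filter (0 < ·)).map f).prod = (l.map f).prod := by
  have hzeros : ((l.filter fun x => ¬0 < x).map f).prod = 1 := by
    refine List.prod_eq_one fun x hx => ?_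
    obtain ⟨y, hy, rfl⟩ := List.mem_map.1 hx
    simp_all
  rw [← List.prod_map_filter_mul_prod_map_filter_not (0 < ·) f l, hzeros, mul_one]

def sqNorm (l : List ℕ) : ℕ := (l.map (· ^ 2)).sum

theorem sqNorm_append (l₁ l₂ : List ℕ) : sqNorm (l₁ ++ l₂) = sqNorm l₁ + sqNorm l₂ := by
  simp [sqNorm]

theorem sqNorm_le_mul_sum {k : ℕ} {l : List ℕ} (hl : KBounded k l) : sqNorm l ≤ k * l.sum := by
  calc sqNorm l ≤ (l.map (k * ·)).sum :=
        List.sum_le_sum fun x hx => by rw [sq]; exact Nat.mul_le_mul_right x (hl x hx)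
    _ = k * l.sum := by rw [List.sum_map_mul_left, List.map_id']

theorem hProd_append (l₁ l₂ : List ℕ) : hProd (l₁ ++ l₂) = hProd l₁ * hProd l₂ := by
  simp [hProd]

/-- The lists `l` need not be partitions: zero parts and reorderings do not change `h_l`. -/
def hSpanGE (k n w : ℕ) : Submodule ℚ SymFn :=
  span ℚ (hProd '' {l | KBounded k l ∧ l.sum = n ∧ w ≤ sqNorm l})

section hSpanGE

variable {k n n' w w' : ℕ}

theorem hProd_mem_hSpanGE {l : List ℕ} (hl : KBounded k l) : hProd l ∈ hSpanGE k l.sum (sqNorm l) :=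
  subset_span ⟨l, ⟨hl, rfl, le_rfl⟩, rfl⟩

theorem hSpanGE_anti (h : w ≤ w') : hSpanGE k n w' ≤ hSpanGE k n w :=
  span_mono (Set.image_mono fun _ ⟨hk, hn, hw⟩ => ⟨hk, hn, h.trans hw⟩)

theorem mul_mem_hSpanGE {f g : SymFn} (hf : f ∈ hSpanGE k n w) (hg : g ∈ hSpanGE k n' w') :
    f * g ∈ hSpanGE k (n + n') (w + w') := by
  have hfg := mul_mem_mul hf hg
  rw [hSpanGE, hSpanGE, span_mul_span] at hfg
  refine span_mono ?_ hfg
  rintro _ ⟨_, ⟨l, ⟨hl, rfl, hw⟩, rfl⟩, _, ⟨l', ⟨hl', rfl, hw'⟩, rfl⟩, rfl⟩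
  refine ⟨l ++ l', ⟨fun x hx => ?_, List.sum_append, ?_⟩, hProd_append l l'⟩
  · exact (List.mem_append.1 hx).elim (hl x) (hl' x)
  · rw [sqNorm_append]
    omega

theorem prod_map_sub_hProd_flatten_mem_hSpanGE {x : List ℕ → SymFn} :
    ∀ {bs : List (List ℕ)},
      (∀ b ∈ bs, KBounded k b ∧ x b - hProd b ∈ hSpanGE k b.sum (sqNorm b + 1)) →
      (bs.map x).prod - hProd bs.flatten ∈ hSpanGE k bs.flatten.sum (sqNorm bs.flatten + 1)
  | [], _ => by simp [hProd]
  | b :: bs, h => by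
    obtain ⟨hb, hxb⟩ := h b List.mem_cons_self
    have ih := prod_map_sub_hProd_flatten_mem_hSpanGE fun b' hb' =>
      h b' (List.mem_cons_of_mem _ hb')
    have hbs : KBounded k bs.flatten := fun y hy => by
      obtain ⟨b', hb', hy⟩ := List.mem_flatten.1 hy
      exact (h b' (List.mem_cons_of_mem _ hb')).1 y hy
    have hX : (bs.map x).prod ∈ hSpanGE k bs.flatten.sum (sqNorm bs.flatten) := by
      rw [← sub_add_cancel (bs.map x).prod (hProd bs.flatten)]
      exact add_mem (hSpanGE_anti (Nat.le_succ _) ih) (hProd_mem_hSpanGE hbs)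
    have hsplit : x b * (bs.map x).prod - hProd (b ++ bs.flatten)
        = (x b - hProd b) * (bs.map x).prod + hProd b * ((bs.map x).prod - hProd bs.flatten) := by
      rw [hProd_append]
      ring
    simp only [List.map_cons, List.prod_cons, List.flatten_cons, List.sum_append, sqNorm_append]
    rw [hsplit]
    exact add_mem (hSpanGE_anti (by omega) (mul_mem_hSpanGE hxb hX))
      (hSpanGE_anti (by omega) (mul_mem_hSpanGE (hProd_mem_hSpanGE hb) ih))

end hSpanGE

abbrev BoundedPartition (k : ℕ) : Type := {l : List ℕ // IsPartition l ∧ KBounded k l}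

theorem exists_boundedPartition_hProd_eq {k : ℕ} {l : List ℕ} (hl : KBounded k l) :
    ∃ μ : BoundedPartition k, hProd μ.1 = hProd l ∧ μ.1.sum = l.sum ∧ sqNorm μ.1 = sqNorm l := by
  set l' := l.filter (0 < ·)
  have hperm : List.Perm (l'.insertionSort (· ≥ ·)) l' := List.perm_insertionSort _ _
  refine ⟨⟨l'.insertionSort (· ≥ ·), ⟨List.pairwise_insertionSort _ _, fun x hx => ?_⟩,
    fun x hx => ?_⟩, ?_, ?_, ?_⟩
  · simpa using (List.mem_filter.1 (hperm.subset hx)).2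
  · exact hl x (List.mem_of_mem_filter (hperm.subset hx))
  · rw [hProd, (hperm.map _).prod_eq, List.prod_map_filter_pos rfl, hProd]
  · rw [hperm.sum_eq]
    simpa using List.sum_map_filter_pos (f := id) rfl l
  · rw [sqNorm, (hperm.map _).sum_eq, List.sum_map_filter_pos (by simp), sqNorm]

def Higher {k : ℕ} (μ ν : BoundedPartition k) : Prop :=
  ν.1.sum = μ.1.sum ∧ sqNorm μ.1 < sqNorm ν.1

section Higher

variable {k : ℕ}

instance : IsTrans (BoundedPartition k) Higher :=
  ⟨fun _ _ _ h₁ h₂ => ⟨h₂.1.trans h₁.1, h₁.2.trans h₂.2⟩⟩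

theorem wellFounded_higher : WellFounded (@Higher k) :=
  Subrelation.wf (fun h => h.2)
    (InvImage.wf (fun μ : BoundedPartition k => sqNorm μ.1) wellFounded_lt)

theorem wellFounded_flip_higher : WellFounded (flip (@Higher k)) := by
  refine Subrelation.wf (fun {μ ν} (h : Higher ν μ) => ?_)
    (InvImage.wf (fun μ : BoundedPartition k => k * μ.1.sum - sqNorm μ.1) wellFounded_lt)
  have hμ := sqNorm_le_mul_sum μ.2.2
  change k * μ.1.sum - sqNorm μ.1 < k * ν.1.sum - sqNorm ν.1
  rw [h.1] at hμ ⊢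
  have := h.2
  omega

theorem span_hProd_higher (μ : BoundedPartition k) :
    span ℚ ((fun ν : BoundedPartition k => hProd ν.1) '' {ν | Higher μ ν})
      = hSpanGE k μ.1.sum (sqNorm μ.1 + 1) := by
  unfold hSpanGE
  apply le_antisymm <;> rw [span_le]
  · rintro _ ⟨ν, ⟨hsum, hsq⟩, rfl⟩
    exact subset_span ⟨ν.1, ⟨ν.2.2, hsum, hsq⟩, rfl⟩
  · rintro _ ⟨l, ⟨hl, hsum, hsq⟩, rfl⟩
    obtain ⟨ν, hh, hs, hq⟩ := exists_boundedPartition_hProd_eq hl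
    exact subset_span ⟨ν, ⟨hs.trans hsum, hq ▸ hsq⟩, hh⟩

end Higher

theorem sum_sq_lt_sum_sq_comp_perm {n : ℕ} {g : Fin n → ℤ} (hg : StrictAnti g)
    {σ : Equiv.Perm (Fin n)} (hσ : σ ≠ 1) :
    ∑ i, (g i + i) ^ 2 < ∑ i, (g (σ i) + i) ^ 2 := by
  have hanti : Antivary g (fun i : Fin n => (i : ℤ)) := fun i j (hij : (i : ℤ) < j) =>
    hg.antitone (Fin.le_iff_val_le_val.2 (by omega))
  have hσ_anti : ¬Antivary (g ∘ σ) (fun i : Fin n => (i : ℤ)) := by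
    refine fun h => hσ (σ.monotone_iff.1 fun i j hij => le_of_not_gt fun hlt => ?_)
    rcases hij.lt_or_eq with hij | rfl
    · exact (hg hlt).not_ge (h (show (i : ℤ) < j by have := Fin.lt_def.1 hij; omega))
    · exact lt_irrefl _ hlt
  have hlt := hanti.sum_mul_lt_sum_comp_perm_mul_iff.2 hσ_anti
  have hperm : ∑ i, g (σ i) ^ 2 = ∑ i, g i ^ 2 := Equiv.sum_comp σ (g · ^ 2)
  simp only [add_sq, Finset.sum_add_distrib, hperm]
  simp only [mul_assoc, ← Finset.mul_sum] at hlt ⊢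
  linarith

theorem prod_hZ_mem_hSpanGE {k m w n : ℕ} (a : Fin n → ℤ) (hk : ∀ i, a i ≤ k)
    (hm : ∑ i, a i = m) (hw : w ≤ ∑ i, a i ^ 2) : ∏ i, hZ (a i) ∈ hSpanGE k m w := by
  by_cases hneg : ∃ i, a i < 0
  · obtain ⟨i, hi⟩ := hneg
    rw [Finset.prod_eq_zero (Finset.mem_univ i) (by simp [hZ, hi])]
    exact zero_mem _
  push Not at hneg
  set l := List.ofFn fun i => (a i).toNat
  have hcast : ∀ i, ((a i).toNat : ℤ) = a i := fun i => Int.toNat_of_nonneg (hneg i)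
  have hprod : ∏ i, hZ (a i) = hProd l := by
    simp [l, hProd, List.prod_ofFn, hZ, not_lt.2 (hneg _)]
  rw [hprod]
  refine subset_span ⟨l, ⟨fun x hx => ?_, ?_, ?_⟩, rfl⟩
  · obtain ⟨i, rfl⟩ := List.mem_ofFn.1 hx
    have := hk i
    omega
  · simp only [l, List.sum_ofFn]
    exact_mod_cast (by simpa [hcast] using hm : ∑ i, ((a i).toNat : ℤ) = m)
  · simp only [l, sqNorm, List.map_ofFn, List.sum_ofFn]
    exact_mod_cast (by simpa [hcast] using hw : (w : ℤ) ≤ ∑ i, ((a i).toNat : ℤ) ^ 2)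

theorem get_le_headI {l : List ℕ} (hl : l.Pairwise (· ≥ ·)) (j : Fin l.length) :
    l.get j ≤ l.headI := by
  cases l with
  | nil => exact j.elim0
  | cons a t =>
    rcases j with ⟨_ | j, hj⟩
    · simp
    · exact (List.pairwise_cons.1 hl).1 _ (List.getElem_mem _)

theorem schur_sub_hProd_mem_hSpanGE {k : ℕ} {l : List ℕ} (hl : l.Pairwise (· ≥ ·))
    (hk : mainHook l ≤ k) : schur l - hProd l ∈ hSpanGE k l.sum (sqNorm l + 1) := by
  set g : Fin l.length → ℤ := fun j => l.get j - j
  have hg : StrictAnti g := fun i j hij => by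
    have := hl.rel_get_of_lt hij
    have := Fin.lt_def.1 hij
    simp only [g]
    omega
  rw [schur, Matrix.det_apply, ← Finset.add_sum_erase _ _ (Finset.mem_univ 1)]
  rw [add_sub_right_comm]
  -- the identity permutation contributes exactly `h_l`
  refine add_mem (by rw [sub_eq_zero_of_eq (by simp [hZ, hProd, not_lt.2])]; exact zero_mem _) ?_
  refine sum_mem fun σ hσ => ?_
  rw [Units.smul_def]
  refine zsmul_mem (prod_hZ_mem_hSpanGE (fun i => g (σ i) + i) (fun i => ?_) ?_ ?_) _
  · have := get_le_headI hl (σ i)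
    have : (i : ℕ) < l.length := i.2
    simp only [g, mainHook] at *
    omega
  · rw [Finset.sum_add_distrib, Equiv.sum_comp σ g]
    simp [g, Fin.sum_univ_fun_getElem]
  · have hsq : (sqNorm l : ℤ) = ∑ i, (g i + i) ^ 2 := by
      simp only [g, sub_add_cancel, List.get_eq_getElem]
      rw [Fin.sum_univ_fun_getElem l (fun x : ℕ => (x : ℤ) ^ 2), sqNorm]
      simp [Function.comp_def]
    have := sum_sq_lt_sum_sq_comp_perm hg (Finset.ne_of_mem_erase hσ)
    push_cast
    omega

theorem kSplitAux_spec {k : ℕ} (fuel : ℕ) {l : List ℕ} (hl : KBounded k l)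
    (hfuel : l.length ≤ fuel) :
    (kSplitAux k fuel l).flatten = l ∧ ∀ b ∈ kSplitAux k fuel l, b.Sublist l ∧ mainHook b ≤ k := by
  induction fuel generalizing l with
  | zero => simp [List.length_eq_zero_iff.1 (Nat.le_zero.1 hfuel), kSplitAux]
  | succ fuel ih =>
    cases l with
    | nil => simp [kSplitAux]
    | cons a rest =>
      have ha := hl a List.mem_cons_self
      rw [kSplitAux]
      split_ifs with hlast
      · refine ⟨by simp, fun b hb => ?_⟩
        rw [List.mem_singleton.1 hb, mainHook]
        simp only [List.headI_cons, List.length_cons] at hlast ⊢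
        exact ⟨List.Sublist.refl _, by omega⟩
      · push Not at hlast
        obtain ⟨hflat, hblocks⟩ := ih (l := (a :: rest).drop (k + 1 - a))
          (fun x hx => hl x (List.mem_of_mem_drop hx)) (by simp at hfuel ⊢; omega)
        refine ⟨by rw [List.flatten_cons, hflat, List.take_append_drop], fun b hb => ?_⟩
        rcases List.mem_cons.1 hb with rfl | hb
        · refine ⟨List.take_sublist _ _, ?_⟩
          obtain ⟨m, hm⟩ : ∃ m, k + 1 - a = m + 1 := ⟨k - a, by omega⟩
          rw [hm, List.take_succ_cons, mainHook]
          simp only [List.headI_cons, List.length_cons, List.length_take] at hlast ⊢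
          omega
        · exact ⟨(hblocks b hb).1.trans (List.drop_sublist _ _), (hblocks b hb).2⟩

theorem Gk_sub_hProd_mem_hSpanGE {k : ℕ} {l : List ℕ} (hl : l.Pairwise (· ≥ ·))
    (hk : KBounded k l) : Gk k l - hProd l ∈ hSpanGE k l.sum (sqNorm l + 1) := by
  obtain ⟨hflat, hblocks⟩ := kSplitAux_spec l.length hk le_rfl
  have := prod_map_sub_hProd_flatten_mem_hSpanGE (x := schur) (bs := kSplit k l) fun b hb =>
    ⟨fun x hx => hk x ((hblocks b hb).1.subset hx),
      schur_sub_hProd_mem_hSpanGE (hl.sublist (hblocks b hb).1) (hblocks b hb).2⟩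
  rwa [kSplit, hflat] at this

theorem span_Gk_higher {k : ℕ} (μ : BoundedPartition k) :
    span ℚ ((fun ν : BoundedPartition k => Gk k ν.1) '' {ν | Higher μ ν})
      = hSpanGE k μ.1.sum (sqNorm μ.1 + 1) := by
  have hG (ν : BoundedPartition k) : Gk k ν.1 - hProd ν.1
      ∈ span ℚ ((fun ν' : BoundedPartition k => hProd ν'.1) '' {ν' | Higher ν ν'}) := by
    rw [span_hProd_higher]
    exact Gk_sub_hProd_mem_hSpanGE ν.2.1.1 ν.2.2
  rw [span_image_eq_of_sub_mem_span wellFounded_flip_higher hG, span_hProd_higher]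

theorem schur_singleton (a : ℕ) : schur [a] = hh a := by
  simp [schur, hZ]

namespace ProjOps

variable {k : ℕ} {T : ℕ → (SymFn →ₗ[ℚ] SymFn)}

theorem map_mem_hSpanGE (hT : ProjOps k T) (j : ℕ) (μ : BoundedPartition k) {f : SymFn}
    (hf : f ∈ hSpanGE k μ.1.sum (sqNorm μ.1 + 1)) :
    T j f ∈ hSpanGE k μ.1.sum (sqNorm μ.1 + 1) := by
  rw [← span_Gk_higher] at hf ⊢
  refine (span_le (p := (span ℚ _).comap (T j))).2 ?_ hf
  rintro _ ⟨ν, hν, rfl⟩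
  simp only [SetLike.mem_coe, mem_comap, hT j ν.1 ν.2.1 ν.2.2]
  split_ifs
  · exact subset_span ⟨ν, hν, rfl⟩
  · exact zero_mem _

theorem kSchurWith_sub_hProd_mem_hSpanGE (hT : ProjOps k T) :
    ∀ {l : List ℕ}, IsPartition l → KBounded k l →
      kSchurWith T l - hProd l ∈ hSpanGE k l.sum (sqNorm l + 1)
  | [], _, _ => by simp [kSchurWith, hProd]
  | a :: rest, hl, hk => by
    have hrest : IsPartition rest :=
      ⟨(List.pairwise_cons.1 hl.1).2, fun x hx => hl.2 x (List.mem_cons_of_mem _ hx)⟩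
    have ih := kSchurWith_sub_hProd_mem_hSpanGE hT hrest
      fun x hx => hk x (List.mem_cons_of_mem _ hx)
    have hG := Gk_sub_hProd_mem_hSpanGE hl.1 hk
    have ha : hh a ∈ hSpanGE k a (a ^ 2) := by
      have hka : KBounded k [a] := by simpa [KBounded] using hk a List.mem_cons_self
      simpa [hProd, sqNorm] using hProd_mem_hSpanGE hka
    have hX : hh a * kSchurWith T rest - Gk k (a :: rest)
        ∈ hSpanGE k (a :: rest).sum (sqNorm (a :: rest) + 1) := by
      have hsplit : hh a * kSchurWith T rest - Gk k (a :: rest)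
          = hh a * (kSchurWith T rest - hProd rest) - (Gk k (a :: rest) - hProd (a :: rest)) := by
        simp only [hProd, List.map_cons, List.prod_cons]
        ring
      rw [hsplit]
      refine sub_mem ?_ hG
      simpa [sqNorm, add_assoc] using mul_mem_hSpanGE ha ih
    have hTG : T a (Gk k (a :: rest)) = Gk k (a :: rest) := by
      rw [hT a _ hl hk]
      exact if_pos rfl
    have hkSchur : kSchurWith T (a :: rest)
        = Gk k (a :: rest) + T a (hh a * kSchurWith T rest - Gk k (a :: rest)) := by
      rw [kSchurWith, schur_singleton, map_sub, hTG]
      abel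
    rw [hkSchur, add_sub_right_comm]
    exact add_mem hG (hT.map_mem_hSpanGE a ⟨a :: rest, hl, hk⟩ hX)

end ProjOps

theorem hProd_eq_monomial {l : List ℕ} (hl : ∀ x ∈ l, 0 < x) :
    hProd l = MvPolynomial.monomial (Multiset.toFinsupp ↑(l.map (· - 1))) 1 := by
  induction l with
  | nil => simp [hProd]
  | cons a t ih =>
    obtain ⟨b, rfl⟩ : ∃ b, a = b + 1 := ⟨a - 1, by have := hl a (by simp); omega⟩
    rw [hProd, List.map_cons, List.prod_cons, ← hProd, ih fun x hx => hl x (by simp [hx])]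
    simp only [hh, MvPolynomial.X, MvPolynomial.monomial_mul, mul_one, List.map_cons,
      ← Multiset.cons_coe, ← Multiset.singleton_add, Multiset.toFinsupp_add,
      Multiset.toFinsupp_singleton]
    simp

theorem linearIndependent_hProd {P : List ℕ → Prop} (hP : ∀ l, P l → IsPartition l) :
    LinearIndependent ℚ (fun μ : {l : List ℕ // P l} => hProd μ.1) := by
  have hmono : (fun μ : {l : List ℕ // P l} => hProd μ.1)
      = MvPolynomial.basisMonomials ℕ ℚ ∘ fun μ => Multiset.toFinsupp ↑(μ.1.map (· - 1)) :=
    funext fun μ => by simp [hProd_eq_monomial (hP _ μ.2).2]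
  rw [hmono]
  refine (MvPolynomial.basisMonomials ℕ ℚ).linearIndependent.comp _ fun μ ν h => Subtype.ext ?_
  have hsucc (l : List ℕ) (hl : ∀ x ∈ l, 0 < x) : (l.map (· - 1)).map (· + 1) = l := by
    rw [List.map_map]
    exact (List.map_congr_left fun x hx => Nat.sub_add_cancel (hl x hx)).trans (List.map_id l)
  have hperm := (Multiset.coe_eq_coe.1 (Multiset.toFinsupp.injective h)).map (· + 1)
  rw [hsucc _ (hP _ μ.2).2, hsucc _ (hP _ ν.2).2] at hperm
  exact hperm.eq_of_pairwise (fun _ _ _ _ h₁ h₂ => le_antisymm h₂ h₁) (hP _ μ.2).1 (hP _ ν.2).1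

theorem kSchur_basis_general (k : ℕ)
    (T : ℕ → (SymFn →ₗ[ℚ] SymFn)) (hT : ProjOps k T) :
    LinearIndependent ℚ
      (fun l : {l : List ℕ // IsPartition l ∧ KBounded k l} => kSchurWith T l.1) ∧
    Submodule.span ℚ
      (Set.range fun l : {l : List ℕ // IsPartition l ∧ KBounded k l} =>
        kSchurWith T l.1) = LamK k := by
  have hexp (μ : BoundedPartition k) : kSchurWith T μ.1 - hProd μ.1
      ∈ span ℚ ((fun ν : BoundedPartition k => hProd ν.1) '' {ν | Higher μ ν}) := by
    rw [span_hProd_higher]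
    exact hT.kSchurWith_sub_hProd_mem_hSpanGE μ.2.1 μ.2.2
  refine ⟨(linearIndependent_hProd fun _ h => h.1).of_sub_mem_span_image wellFounded_higher hexp,
    ?_⟩
  rw [span_range_eq_of_sub_mem_span wellFounded_flip_higher hexp, LamK]
  congr 1
  ext f
  simp [eq_comm, and_assoc]

/-- The `k`-Schur functions `{s_λ^{(k)}}`, indexed by the
`k`-bounded partitions `λ`, form a basis of the vector space `Λ^{(k)}`. -/
theorem kSchur_basis (k : ℕ) (hk : 1 ≤ k)
    (T : ℕ → (SymFn →ₗ[ℚ] SymFn)) (hT : ProjOps k T) :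
    LinearIndependent ℚ
      (fun l : {l : List ℕ // IsPartition l ∧ KBounded k l} => kSchurWith T l.1) ∧
    Submodule.span ℚ
      (Set.range fun l : {l : List ℕ // IsPartition l ∧ KBounded k l} =>
        kSchurWith T l.1) = LamK k :=
  kSchur_basis_general k T hT
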